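/- A cell complex X satisfies a linear homological isoperimetric inequality over 𝕂 (i.e., there is A ≥ 0 with FV_{X,𝕂}(k) ≤ A·k for all k) if and only if there is a constant A' ≥ 0 such that for every circuit c in the 1-skeleton of X there exists β ∈ C₂(X, 𝕂) with ∂β equal to the 1-cycle induced by c and ‖β‖₁ ≤ A'·|c|. -/

import Mathlib

open Finsupp

/-- A (combinatorial, oriented) graph: the 1-skeleton data of a complex. -/
structure CGraph where
  V : Type
  E : Type
  ends : E → V × V

/-- ℓ¹-norm of an integral chain. -/
def l1Z {α : Type} (c : α →₀ ℤ) : ℕ := c.sum fun _ v => v.natAbs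

/-- Two chains are disjoint if no basis element has nonzero coefficient in both. -/
def DisjointChains {α : Type} (a b : α →₀ ℤ) : Prop := ∀ x, a x = 0 ∨ b x = 0

namespace CGraph

variable (Γ : CGraph)

/-- Source vertex of a directed edge (an edge with an orientation bit). -/
def src (p : Γ.E × Bool) : Γ.V := if p.2 then (Γ.ends p.1).1 else (Γ.ends p.1).2

/-- Target vertex of a directed edge. -/
def tgt (p : Γ.E × Bool) : Γ.V := if p.2 then (Γ.ends p.1).2 else (Γ.ends p.1).1

/-- A nonempty cyclically-consecutive list of directed edges. -/
def IsClosedPath (l : List (Γ.E × Bool)) : Prop :=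
  l ≠ [] ∧ ∀ i : Fin l.length,
    Γ.tgt (l.get i) = Γ.src (l.get ⟨(↑i + 1) % l.length, Nat.mod_lt _ i.pos⟩)

/-- A circuit: a simple closed combinatorial path (no repeated edges or vertices). -/
def IsCircuit (l : List (Γ.E × Bool)) : Prop :=
  Γ.IsClosedPath l ∧ (l.map Prod.fst).Nodup ∧ (l.map Γ.src).Nodup

/-- The 1-cycle induced by a closed path: coefficient ±1 on each traversed edge. -/
noncomputable def pathCycle (l : List (Γ.E × Bool)) : Γ.E →₀ ℤ :=
  (l.map fun p => Finsupp.single p.1 (if p.2 then (1 : ℤ) else -1)).sum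

/-- The simplicial boundary map `C₁ → C₀`. -/
noncomputable def d1 (γ : Γ.E →₀ ℤ) : Γ.V →₀ ℤ :=
  γ.sum fun e c => c • (Finsupp.single (Γ.ends e).2 (1 : ℤ) - Finsupp.single (Γ.ends e).1 1)

/-- A 1-chain is a cycle if its boundary vanishes. -/
def IsCycle (γ : Γ.E →₀ ℤ) : Prop := Γ.d1 γ = 0

/-- A graph is fine if each edge lies in only finitely many circuits of each bounded length. -/
def Fine : Prop :=
  ∀ (e : Γ.E) (L : ℕ),
    {l : List (Γ.E × Bool) | Γ.IsCircuit l ∧ e ∈ l.map Prod.fst ∧ l.length ≤ L}.Finite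

/-- Walks from `u` to `v`. -/
def IsWalk : List (Γ.E × Bool) → Γ.V → Γ.V → Prop
  | [], u, v => u = v
  | p :: l, u, v => Γ.src p = u ∧ IsWalk l (Γ.tgt p) v

/-- Combinatorial distance in a graph (∞ if there is no walk). -/
noncomputable def gdist (u v : Γ.V) : ℕ∞ :=
  ⨅ l ∈ {l : List (Γ.E × Bool) | Γ.IsWalk l u v}, (l.length : ℕ∞)

def Connected : Prop := ∀ u v : Γ.V, Γ.gdist u v < ⊤

/-- Gromov hyperbolicity via the four-point condition. -/
def Hyperbolic : Prop :=
  ∃ δ : ℕ, ∀ x y z w : Γ.V,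
    Γ.gdist x y + Γ.gdist z w ≤
      max (Γ.gdist x z + Γ.gdist y w) (Γ.gdist x w + Γ.gdist y z) + (δ : ℕ∞)

end CGraph

/-- A combinatorial 2-complex: a graph together with a set of 2-cells, each with a
boundary 1-chain. -/
structure TwoComplex extends CGraph where
  F : Type
  fb : F → E →₀ ℤ

namespace TwoComplex

variable (X : TwoComplex)

/-- The boundary map `C₂ → C₁` over ℤ. -/
noncomputable def d2 (μ : X.F →₀ ℤ) : X.E →₀ ℤ := μ.sum fun f c => c • X.fb f

/-- The filling norm `‖γ‖_∂` over ℤ (∞ if `γ` bounds no 2-chain). -/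
noncomputable def fillNorm (γ : X.E →₀ ℤ) : ℕ∞ :=
  ⨅ μ ∈ {μ : X.F →₀ ℤ | X.d2 μ = γ}, (l1Z μ : ℕ∞)

/-- The homological Dehn function of `X` over ℤ. -/
noncomputable def FV (k : ℕ) : ℕ∞ :=
  ⨆ γ ∈ {γ : X.E →₀ ℤ | X.toCGraph.IsCycle γ ∧ l1Z γ ≤ k}, X.fillNorm γ

end TwoComplex

/-- ℓ¹-norm of a chain with coefficients in an ordered ring 𝕂. -/
def l1K {α : Type} {K : Type} [CommRing K] [LinearOrder K] [IsStrictOrderedRing K] (c : α →₀ K) : K :=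
  c.sum fun _ v => |v|

/-- Base change ℤ → 𝕂 of chains. -/
noncomputable def castZK {α : Type} {K : Type} [CommRing K] [LinearOrder K] [IsStrictOrderedRing K]
    (c : α →₀ ℤ) : α →₀ K :=
  c.mapRange Int.cast Int.cast_zero

/-- The boundary map C₂ → C₁ over 𝕂. -/
noncomputable def TwoComplex.d2K (X : TwoComplex) {K : Type} [CommRing K] [LinearOrder K] [IsStrictOrderedRing K]
    (μ : X.F →₀ K) : X.E →₀ K :=
  μ.sum fun f c => c • castZK (X.fb f)

/-!
Orient each edge in the support of a nonzero integral 1-cycle `γ` along the sign of its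
coefficient. Since `∂γ = 0`, every vertex entered by such an active edge is also left by one,
so one can keep walking along active edges; the first repeated vertex closes off a circuit `c`.
As `c` follows the signs of `γ`, `‖γ - c‖₁ = ‖γ‖₁ - |c|`, so by induction on `‖γ‖₁` the
cycle `γ` is a norm-additive sum of circuit cycles, and adding up their fillings fills `γ`
with norm at most `A‖γ‖₁`. Conversely a circuit cycle is a cycle of norm `|c|`.
-/

lemma Nat.exists_lt_eq_and_injOn_Ico {β : Type*} {v : ℕ → β} (hv : (Set.range v).Finite) :
    ∃ i j, i < j ∧ v i = v j ∧ Set.InjOn v (Set.Ico i j) := by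
  classical
  have hrep : ∃ j, ∃ i < j, v i = v j := by
    have := hv.to_subtype
    obtain ⟨a, b, hab, h⟩ := Finite.exists_ne_map_eq_of_infinite (Set.rangeFactorization v)
    have h : v a = v b := congrArg Subtype.val h
    rcases lt_or_gt_of_ne hab with hlt | hlt
    · exact ⟨b, a, hlt, h⟩
    · exact ⟨a, b, hlt, h.symm⟩
  obtain ⟨i, hij, hvij⟩ := Nat.find_spec hrep
  refine ⟨i, Nat.find hrep, hij, hvij, fun k hk k' hk' hkk' => ?_⟩
  -- a repetition inside `[i, j)` would be an earlier repetition than the first one, at `j`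
  by_contra hne
  rcases lt_or_gt_of_ne hne with hlt | hlt
  · exact Nat.find_min hrep hk'.2 ⟨k, hlt, hkk'⟩
  · exact Nat.find_min hrep hk.2 ⟨k', hlt, hkk'.symm⟩

section Chains

variable {α : Type}

lemma l1Z_eq_sum (c : α →₀ ℤ) {s : Finset α} (h : c.support ⊆ s) :
    l1Z c = ∑ x ∈ s, (c x).natAbs :=
  Finsupp.sum_of_support_subset c h _ fun _ _ => rfl

lemma l1Z_eq_add_of_natAbs_eq_add {a b c : α →₀ ℤ}
    (h : ∀ x, (a x).natAbs = (b x).natAbs + (c x).natAbs) : l1Z a = l1Z b + l1Z c := by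
  classical
  rw [l1Z_eq_sum a (Finset.subset_union_left.trans Finset.subset_union_left),
    l1Z_eq_sum b (Finset.subset_union_right.trans Finset.subset_union_left),
    l1Z_eq_sum c Finset.subset_union_right, ← Finset.sum_add_distrib]
  exact Finset.sum_congr rfl fun x _ => h x

variable {K : Type} [CommRing K] [LinearOrder K] [IsStrictOrderedRing K]

lemma l1K_eq_sum (c : α →₀ K) {s : Finset α} (h : c.support ⊆ s) :
    l1K c = ∑ x ∈ s, |c x| :=
  Finsupp.sum_of_support_subset c h _ fun _ _ => abs_zero

lemma l1K_zero : l1K (0 : α →₀ K) = 0 := Finsupp.sum_zero_index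

lemma l1K_add_le (a b : α →₀ K) : l1K (a + b) ≤ l1K a + l1K b := by
  classical
  rw [l1K_eq_sum _ Finsupp.support_add, l1K_eq_sum a Finset.subset_union_left,
    l1K_eq_sum b Finset.subset_union_right, ← Finset.sum_add_distrib]
  exact Finset.sum_le_sum fun x _ => abs_add_le (a x) (b x)

lemma castZK_add (a b : α →₀ ℤ) : castZK (a + b) = (castZK a + castZK b : α →₀ K) :=
  Finsupp.mapRange_add Int.cast_add a b

lemma castZK_zero : castZK (0 : α →₀ ℤ) = (0 : α →₀ K) := Finsupp.mapRange_zero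

end Chains

namespace CGraph

variable (Γ : CGraph)

lemma d1_eq_linearCombination :
    Γ.d1 = Finsupp.linearCombination ℤ fun e =>
      Finsupp.single (Γ.ends e).2 (1 : ℤ) - Finsupp.single (Γ.ends e).1 1 := rfl

lemma d1_apply [DecidableEq Γ.V] (γ : Γ.E →₀ ℤ) (v : Γ.V) :
    Γ.d1 γ v = ∑ e ∈ γ.support,
      γ e * ((if (Γ.ends e).2 = v then 1 else 0) - if (Γ.ends e).1 = v then 1 else 0) := by
  rw [d1, Finsupp.sum_apply, Finsupp.sum]
  refine Finset.sum_congr rfl fun e _ => ?_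
  simp [Finsupp.single_apply, mul_sub]

variable {Γ} in
lemma IsCycle.sub {γ γ' : Γ.E →₀ ℤ} (h : Γ.IsCycle γ) (h' : Γ.IsCycle γ') :
    Γ.IsCycle (γ - γ') := by
  rw [IsCycle, d1_eq_linearCombination, map_sub, ← d1_eq_linearCombination, h, h', sub_zero]

lemma pathCycle_cons (p : Γ.E × Bool) (l : List (Γ.E × Bool)) :
    Γ.pathCycle (p :: l) = Finsupp.single p.1 (if p.2 then 1 else -1) + Γ.pathCycle l := by
  simp [pathCycle]

lemma pathCycle_apply_of_notMem {l : List (Γ.E × Bool)} {e : Γ.E}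
    (he : e ∉ l.map Prod.fst) : Γ.pathCycle l e = 0 := by
  induction l with
  | nil => simp [pathCycle]
  | cons p l ih =>
    simp only [List.map_cons, List.mem_cons, not_or] at he
    rw [pathCycle_cons, Finsupp.add_apply, Finsupp.single_eq_of_ne he.1, ih he.2,
      add_zero]

lemma pathCycle_apply_of_mem {l : List (Γ.E × Bool)} (hl : (l.map Prod.fst).Nodup)
    {p : Γ.E × Bool} (hp : p ∈ l) : Γ.pathCycle l p.1 = if p.2 then 1 else -1 := by
  induction l with
  | nil => simp at hp
  | cons q l ih =>
    simp only [List.map_cons, List.nodup_cons] at hl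
    rw [pathCycle_cons, Finsupp.add_apply]
    rcases List.mem_cons.mp hp with rfl | hp
    · rw [Finsupp.single_eq_same, pathCycle_apply_of_notMem Γ hl.1, add_zero]
    · have hne : q.1 ≠ p.1 := fun h => hl.1 (h ▸ List.mem_map_of_mem hp)
      rw [Finsupp.single_eq_of_ne hne.symm, ih hl.2 hp, zero_add]

lemma l1Z_pathCycle {l : List (Γ.E × Bool)} (hl : (l.map Prod.fst).Nodup) :
    l1Z (Γ.pathCycle l) = l.length := by
  classical
  have hsupp : (Γ.pathCycle l).support ⊆ (l.map Prod.fst).toFinset := fun e he => by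
    by_contra h
    exact Finsupp.mem_support_iff.mp he (Γ.pathCycle_apply_of_notMem (by simpa using h))
  have hone : ∀ e ∈ (l.map Prod.fst).toFinset, (Γ.pathCycle l e).natAbs = 1 := by
    intro e he
    obtain ⟨p, hp, rfl⟩ := List.mem_map.mp (List.mem_toFinset.mp he)
    rw [Γ.pathCycle_apply_of_mem hl hp]
    split <;> rfl
  rw [l1Z_eq_sum _ hsupp, Finset.sum_congr rfl hone, Finset.sum_const, smul_eq_mul, mul_one,
    List.toFinset_card_of_nodup hl, List.length_map]

lemma IsClosedPath.map_tgt {l : List (Γ.E × Bool)} (hl : Γ.IsClosedPath l) :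
    l.map Γ.tgt = (l.map Γ.src).rotate 1 := by
  refine List.ext_getElem (by simp) fun n h₁ _ => ?_
  have hn : n < l.length := by simpa using h₁
  have := hl.2 ⟨n, hn⟩
  simp only [List.get_eq_getElem] at this
  simp [List.getElem_rotate, this]

lemma isCycle_pathCycle {l : List (Γ.E × Bool)} (hl : Γ.IsClosedPath l) :
    Γ.IsCycle (Γ.pathCycle l) := by
  have hd : Γ.d1 (Γ.pathCycle l) =
      (l.map fun p => Finsupp.single (Γ.tgt p) 1 - Finsupp.single (Γ.src p) 1).sum := by
    rw [d1_eq_linearCombination, pathCycle, map_list_sum, List.map_map]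
    refine congrArg List.sum (List.map_congr_left fun ⟨e, b⟩ _ => ?_)
    cases b <;> simp [src, tgt, Finsupp.linearCombination_single]
  have hsplit := Multiset.sum_map_sub (m := (l : Multiset (Γ.E × Bool)))
    (f := fun p => Finsupp.single (Γ.tgt p) (1 : ℤ)) (g := fun p => Finsupp.single (Γ.src p) 1)
  simp only [Multiset.map_coe, Multiset.sum_coe] at hsplit
  have hmap (f : Γ.E × Bool → Γ.V) : (l.map fun p => Finsupp.single (f p) (1 : ℤ)) =
      (l.map f).map fun v => Finsupp.single v 1 := by
    rw [List.map_map]; rfl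
  rw [IsCycle, hd, hsplit, hmap, hmap, hl.map_tgt, List.map_rotate,
    (List.rotate_perm _ 1).sum_eq, sub_self]

def Active (γ : Γ.E →₀ ℤ) (p : Γ.E × Bool) : Prop :=
  if p.2 then 0 < γ p.1 else γ p.1 < 0

variable {Γ}

lemma Active.mem_support {γ : Γ.E →₀ ℤ} {p : Γ.E × Bool} (h : Γ.Active γ p) :
    p.1 ∈ γ.support := by
  rcases p with ⟨e, _ | _⟩
  · exact Finsupp.mem_support_iff.mpr (ne_of_lt h)
  · exact Finsupp.mem_support_iff.mpr (ne_of_gt h)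

lemma Active.eq_of_fst_eq {γ : Γ.E →₀ ℤ} {p q : Γ.E × Bool}
    (hp : Γ.Active γ p) (hq : Γ.Active γ q) (h : p.1 = q.1) : p = q := by
  rcases p with ⟨e, _ | _⟩ <;> rcases q with ⟨e', _ | _⟩ <;> simp_all [Active] <;> omega

variable (Γ)

lemma exists_active {γ : Γ.E →₀ ℤ} (h : γ ≠ 0) : ∃ p, Γ.Active γ p := by
  obtain ⟨e, he⟩ := Finsupp.ne_iff.mp h
  rcases lt_or_gt_of_ne he with h | h
  · exact ⟨(e, false), h⟩
  · exact ⟨(e, true), h⟩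

lemma exists_active_src_eq_tgt {γ : Γ.E →₀ ℤ} (hγ : Γ.IsCycle γ) {p : Γ.E × Bool}
    (hp : Γ.Active γ p) : ∃ q, Γ.Active γ q ∧ Γ.src q = Γ.tgt p := by
  classical
  by_contra! hno
  set v := Γ.tgt p
  -- With no active edge leaving `v`, every edge contributes `≥ 0` to `d1 γ v`, and `p` `> 0`.
  have hpos : 0 < Γ.d1 γ v := by
    rw [d1_apply]
    refine Finset.sum_pos' (fun e _ => ?_) ⟨p.1, hp.mem_support, ?_⟩
    · rcases lt_trichotomy (γ e) 0 with h | h | h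
      · have h2 : (Γ.ends e).2 ≠ v := hno (e, false) h
        rw [if_neg h2]
        split_ifs <;> linarith
      · simp [h]
      · have h1 : (Γ.ends e).1 ≠ v := hno (e, true) h
        rw [if_neg h1]
        split_ifs <;> linarith
    · rcases p with ⟨e, _ | _⟩
      · have h1 : (Γ.ends e).1 = v := rfl
        have h2 : (Γ.ends e).2 ≠ v := hno _ hp
        have h : γ e < 0 := hp
        rw [if_pos h1, if_neg h2]
        linarith
      · have h2 : (Γ.ends e).2 = v := rfl
        have h1 : (Γ.ends e).1 ≠ v := hno _ hp
        have h : 0 < γ e := hp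
        rw [if_pos h2, if_neg h1]
        linarith
  rw [hγ] at hpos
  exact lt_irrefl 0 hpos

lemma isClosedPath_ofFn {f : ℕ → Γ.E × Bool} (hf : ∀ n, Γ.src (f (n + 1)) = Γ.tgt (f n))
    {i j : ℕ} (hij : i < j) (hv : Γ.src (f i) = Γ.src (f j)) :
    Γ.IsClosedPath (List.ofFn fun k : Fin (j - i) => f (i + k)) := by
  refine ⟨by simp [List.ofFn_eq_nil_iff]; omega, fun ⟨k, hk⟩ => ?_⟩
  simp only [List.length_ofFn] at hk
  simp only [List.get_ofFn, List.length_ofFn, Fin.cast_mk, ← hf]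
  rcases (show k + 1 < j - i ∨ k + 1 = j - i by omega) with h | h
  · rw [Nat.mod_eq_of_lt h]; rfl
  · rw [h, Nat.mod_self, add_zero, hv]; congr 2; omega

lemma exists_isCircuit_active {γ : Γ.E →₀ ℤ} (hγ : Γ.IsCycle γ) (h0 : γ ≠ 0) :
    ∃ l, Γ.IsCircuit l ∧ ∀ p ∈ l, Γ.Active γ p := by
  obtain ⟨p₀, hp₀⟩ := Γ.exists_active h0
  choose next hnext hsrc using fun p : {p // Γ.Active γ p} => Γ.exists_active_src_eq_tgt hγ p.2
  let F : {p // Γ.Active γ p} → {p // Γ.Active γ p} := fun p => ⟨next p, hnext p⟩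
  let f : ℕ → Γ.E × Bool := fun n => (F^[n] ⟨p₀, hp₀⟩).1
  have hact (n : ℕ) : Γ.Active γ (f n) := (F^[n] _).2
  have hf (n : ℕ) : Γ.src (f (n + 1)) = Γ.tgt (f n) := by
    simp only [f, Function.iterate_succ_apply']
    exact hsrc _
  -- the walk `f` only visits the finitely many vertices incident to the support of `γ`
  have hfin : (Set.range fun n => Γ.src (f n)).Finite :=
    ((γ.support.finite_toSet.prod Set.finite_univ).image Γ.src).subset <| by
      rintro _ ⟨n, rfl⟩
      exact ⟨f n, ⟨(hact n).mem_support, trivial⟩, rfl⟩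
  obtain ⟨i, j, hij, hv, hinj⟩ := Nat.exists_lt_eq_and_injOn_Ico hfin
  have hsrc_inj : Function.Injective fun k : Fin (j - i) => Γ.src (f (i + k)) := fun k k' h =>
    Fin.ext <| Nat.add_left_cancel <|
      hinj ⟨Nat.le_add_right _ _, by omega⟩ ⟨Nat.le_add_right _ _, by omega⟩ h
  refine ⟨List.ofFn fun k : Fin (j - i) => f (i + k),
    ⟨Γ.isClosedPath_ofFn hf hij hv, ?_, ?_⟩, ?_⟩
  · rw [List.map_ofFn, List.nodup_ofFn]
    exact fun k k' h => hsrc_inj (congrArg Γ.src ((hact _).eq_of_fst_eq (hact _) h))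
  · rw [List.map_ofFn, List.nodup_ofFn]
    exact hsrc_inj
  · simp only [List.mem_ofFn, forall_exists_index]
    rintro _ k rfl
    exact hact _

lemma natAbs_eq_natAbs_sub_pathCycle_add {γ : Γ.E →₀ ℤ} {l : List (Γ.E × Bool)}
    (hl : (l.map Prod.fst).Nodup) (hact : ∀ p ∈ l, Γ.Active γ p) (e : Γ.E) :
    (γ e).natAbs = ((γ - Γ.pathCycle l) e).natAbs + (Γ.pathCycle l e).natAbs := by
  rw [Finsupp.sub_apply]
  by_cases he : e ∈ l.map Prod.fst
  · obtain ⟨⟨e, b⟩, hp, rfl⟩ := List.mem_map.mp he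
    have hγ := hact _ hp
    rw [Γ.pathCycle_apply_of_mem hl hp]
    cases b
    · have : γ e < 0 := hγ
      simp only [Bool.false_eq_true, if_false]
      omega
    · have : 0 < γ e := hγ
      simp only [if_true]
      omega
  · rw [Γ.pathCycle_apply_of_notMem he, sub_zero, Int.natAbs_zero, add_zero]

theorem exists_isCircuit_l1Z_eq_l1Z_sub_pathCycle_add {γ : Γ.E →₀ ℤ} (hγ : Γ.IsCycle γ)
    (h0 : γ ≠ 0) :
    ∃ l, Γ.IsCircuit l ∧ l1Z γ = l1Z (γ - Γ.pathCycle l) + l.length := by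
  obtain ⟨l, hl, hact⟩ := Γ.exists_isCircuit_active hγ h0
  refine ⟨l, hl, ?_⟩
  rw [← Γ.l1Z_pathCycle hl.2.1]
  exact l1Z_eq_add_of_natAbs_eq_add (Γ.natAbs_eq_natAbs_sub_pathCycle_add hl.2.1 hact)

end CGraph

namespace TwoComplex

variable (X : TwoComplex) {K : Type} [CommRing K] [LinearOrder K] [IsStrictOrderedRing K]

lemma d2K_zero : X.d2K (0 : X.F →₀ K) = 0 := Finsupp.sum_zero_index

lemma d2K_add (a b : X.F →₀ K) : X.d2K (a + b) = X.d2K a + X.d2K b :=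
  Finsupp.sum_add_index' (fun _ => zero_smul _ _) fun _ _ _ => add_smul _ _ _

theorem exists_fill_of_circuit_fill (A : K)
    (hcirc : ∀ l : List (X.E × Bool), X.IsCircuit l →
      ∃ β : X.F →₀ K, X.d2K β = castZK (X.pathCycle l) ∧ l1K β ≤ A * (l.length : K))
    {γ : X.E →₀ ℤ} (hγ : X.IsCycle γ) :
    ∃ β : X.F →₀ K, X.d2K β = castZK γ ∧ l1K β ≤ A * (l1Z γ : K) := by
  induction hn : l1Z γ using Nat.strong_induction_on generalizing γ with
  | _ n ih =>
  by_cases h0 : γ = 0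
  · subst h0
    refine ⟨0, by rw [d2K_zero, castZK_zero], ?_⟩
    rw [l1K_zero, ← hn]
    simp [l1Z]
  obtain ⟨l, hl, hnorm⟩ := X.exists_isCircuit_l1Z_eq_l1Z_sub_pathCycle_add hγ h0
  have hlen : 0 < l.length := List.length_pos_iff.mpr hl.1.1
  obtain ⟨β', hβ', hβ'norm⟩ :=
    ih _ (by omega) (hγ.sub (X.isCycle_pathCycle hl.1)) rfl
  obtain ⟨βc, hβc, hβcnorm⟩ := hcirc l hl
  refine ⟨β' + βc, by rw [d2K_add, hβ', hβc, ← castZK_add, sub_add_cancel], ?_⟩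
  calc l1K (β' + βc) ≤ l1K β' + l1K βc := l1K_add_le _ _
    _ ≤ A * (l1Z (γ - X.pathCycle l) : K) + A * (l.length : K) := add_le_add hβ'norm hβcnorm
    _ = A * (n : K) := by rw [← hn, hnorm]; push_cast; ring

end TwoComplex

/-- X satisfies a linear homological isoperimetric inequality over 𝕂
(every integral 1-cycle γ has a 𝕂-filling of norm at most A·‖γ‖₁, i.e. FV_{X,𝕂}(k) ≤ A·k)
iff there is A' such that every circuit c bounds a 𝕂-chain of norm at most A'·|c|. -/
theorem linear_isoperimetric_iff_circuit_filling (X : TwoComplex)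
    (K : Type) [CommRing K] [LinearOrder K] [IsStrictOrderedRing K] :
    (∃ A : K, 0 ≤ A ∧ ∀ γ : X.E →₀ ℤ, X.toCGraph.IsCycle γ →
        ∃ β : X.F →₀ K, X.d2K β = castZK γ ∧ l1K β ≤ A * (l1Z γ : K)) ↔
    (∃ A : K, 0 ≤ A ∧ ∀ l : List (X.E × Bool), X.toCGraph.IsCircuit l →
        ∃ β : X.F →₀ K, X.d2K β = castZK (X.toCGraph.pathCycle l) ∧
          l1K β ≤ A * (l.length : K)) := by
  constructor
  · rintro ⟨A, hA, hfill⟩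
    refine ⟨A, hA, fun l hl => ?_⟩
    obtain ⟨β, hβ, hβnorm⟩ := hfill _ (X.isCycle_pathCycle hl.1)
    exact ⟨β, hβ, by rwa [X.l1Z_pathCycle hl.2.1] at hβnorm⟩
  · rintro ⟨A, hA, hcirc⟩
    exact ⟨A, hA, fun γ hγ => X.exists_fill_of_circuit_fill A hcirc hγ⟩
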